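/- Fix α ∈ (0, 1/2). There exist constants c_1, c_2 > 0 (depending only on α) such that for every N ≥ 1, the μ-expectation of the quantum query cost √(N/(|X|+1)) satisfies c_1 ≤ Σ_{X ∈ {0,1}^N} μ(X)·√(N/(|X|+1)) ≤ c_2. -/

import Mathlib

/-! Grouping the inputs by Hamming weight cancels the binomial coefficient in `μ`: up to the
same factor, the normalisation and the expected cost are the generalized harmonic sums
`H_{N+1}(α)` and `√N · H_{N+1}(α + 1/2)`, where `H_n(β) = ∑_{k=1}^{n} k^(-β)`. Concavity of
`x ↦ x^(1-β)` gives `n^(1-β) ≤ H_n(β) ≤ n^(1-β)/(1-β)` for `0 ≤ β < 1`, so the expected cost lies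
between `(1-α)·√(N/(N+1))` and `√(N/(N+1))/(1/2-α)`. -/

open Finset

/-- Hamming weight of a Boolean input `X ∈ {0,1}^N`. -/
def hammingWt {N : ℕ} (X : Fin N → Bool) : ℕ :=
  (Finset.univ.filter (fun i => X i = true)).card

/-- The distribution `μ(X) = c / (C(N,|X|)·(|X|+1)^α·(N+1)^(1-α))`. -/
noncomputable def muDist (α : ℝ) {N : ℕ} (c : ℝ) (X : Fin N → Bool) : ℝ :=
  c / ((N.choose (hammingWt X) : ℝ) * ((hammingWt X : ℝ) + 1) ^ α *
    ((N : ℝ) + 1) ^ (1 - α))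

noncomputable def genHarmonic (β : ℝ) (n : ℕ) : ℝ :=
  ∑ k ∈ range n, ((k : ℝ) + 1) ^ (-β)

def boolFunEquivFinset (ι : Type*) [Fintype ι] [DecidableEq ι] : (ι → Bool) ≃ Finset ι where
  toFun X := univ.filter (fun i => X i = true)
  invFun S i := i ∈ S
  left_inv X := by funext i; simp
  right_inv S := by ext i; simp

lemma sum_hammingWt_eq {M : Type*} [AddCommMonoid M] (N : ℕ) (f : ℕ → M) :
    ∑ X : Fin N → Bool, f (hammingWt X) = ∑ t ∈ range (N + 1), N.choose t • f t := by
  calc ∑ X : Fin N → Bool, f (hammingWt X)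
      = ∑ S : Finset (Fin N), f S.card :=
        Fintype.sum_equiv (boolFunEquivFinset (Fin N)) _ _ fun _ => rfl
    _ = _ := by rw [← powerset_univ, sum_powerset_apply_card, card_univ, Fintype.card_fin]

lemma mul_add_one_rpow_sub_one_le_sub {x p : ℝ} (hx : 0 ≤ x) (hp0 : 0 ≤ p) (hp1 : p ≤ 1) :
    p * (x + 1) ^ (p - 1) ≤ (x + 1) ^ p - x ^ p := by
  have hx1 : 0 < x + 1 := by linarith
  have hs : -1 ≤ -(x + 1)⁻¹ := neg_le_neg (inv_le_one_of_one_le₀ (by linarith))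
  have hx_eq : x = (x + 1) * (1 + -(x + 1)⁻¹) := by field_simp; ring
  have bernoulli := rpow_one_add_le_one_add_mul_self hs hp0 hp1
  calc p * (x + 1) ^ (p - 1) = (x + 1) ^ p - (x + 1) ^ p * (1 + p * -(x + 1)⁻¹) := by
        rw [Real.rpow_sub_one hx1.ne']; ring
    _ ≤ (x + 1) ^ p - (x + 1) ^ p * (1 + -(x + 1)⁻¹) ^ p := by gcongr
    _ = (x + 1) ^ p - x ^ p := by
        rw [← Real.mul_rpow hx1.le (by linarith), ← hx_eq]

lemma genHarmonic_pos (β : ℝ) {n : ℕ} (hn : n ≠ 0) : 0 < genHarmonic β n :=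
  sum_pos (fun _ _ => by positivity) (nonempty_range_iff.mpr hn)

lemma genHarmonic_le {β : ℝ} (hβ0 : 0 ≤ β) (hβ1 : β < 1) (n : ℕ) :
    genHarmonic β n ≤ (n : ℝ) ^ (1 - β) / (1 - β) := by
  have hβ : 0 < 1 - β := by linarith
  rw [le_div_iff₀ hβ, genHarmonic, sum_mul]
  calc ∑ k ∈ range n, ((k : ℝ) + 1) ^ (-β) * (1 - β)
      ≤ ∑ k ∈ range n, (((k + 1 : ℕ) : ℝ) ^ (1 - β) - (k : ℝ) ^ (1 - β)) := by
        gcongr with k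
        have hconcave := mul_add_one_rpow_sub_one_le_sub k.cast_nonneg hβ.le (by linarith)
        push_cast
        rw [sub_sub_cancel_left] at hconcave
        linarith
    _ = (n : ℝ) ^ (1 - β) := by
        rw [sum_range_sub (fun k : ℕ => (k : ℝ) ^ (1 - β)), Nat.cast_zero,
          Real.zero_rpow hβ.ne', sub_zero]

lemma le_genHarmonic {β : ℝ} (hβ : 0 ≤ β) {n : ℕ} (hn : n ≠ 0) :
    (n : ℝ) ^ (1 - β) ≤ genHarmonic β n := by
  have hn' : (0 : ℝ) < n := by positivity
  calc (n : ℝ) ^ (1 - β) = ∑ _k ∈ range n, (n : ℝ) ^ (-β) := by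
        rw [sum_const, card_range, nsmul_eq_mul, sub_eq_add_neg, Real.rpow_add hn',
          Real.rpow_one]
    _ ≤ genHarmonic β n := by
        refine sum_le_sum fun k hk => Real.rpow_le_rpow_of_nonpos (by positivity) ?_ (by linarith)
        exact_mod_cast mem_range.mp hk

lemma genHarmonic_div_le {β γ : ℝ} (hβ : 0 ≤ β) (hγ0 : 0 ≤ γ) (hγ1 : γ < 1) {n : ℕ}
    (hn : n ≠ 0) : genHarmonic γ n / genHarmonic β n ≤ (n : ℝ) ^ (β - γ) / (1 - γ) := by
  have hn' : (0 : ℝ) < n := by positivity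
  calc genHarmonic γ n / genHarmonic β n ≤ (n : ℝ) ^ (1 - γ) / (1 - γ) / (n : ℝ) ^ (1 - β) :=
        div_le_div₀ (by positivity) (genHarmonic_le hγ0 hγ1 n) (by positivity)
          (le_genHarmonic hβ hn)
    _ = (n : ℝ) ^ (β - γ) / (1 - γ) := by
        rw [show β - γ = (1 - γ) - (1 - β) by ring, Real.rpow_sub hn' (1 - γ), div_right_comm]

lemma le_genHarmonic_div {β γ : ℝ} (hβ0 : 0 ≤ β) (hβ1 : β < 1) (hγ : 0 ≤ γ) {n : ℕ}
    (hn : n ≠ 0) : (1 - β) * (n : ℝ) ^ (β - γ) ≤ genHarmonic γ n / genHarmonic β n := by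
  have hn' : (0 : ℝ) < n := by positivity
  calc (1 - β) * (n : ℝ) ^ (β - γ) = (n : ℝ) ^ (1 - γ) / ((n : ℝ) ^ (1 - β) / (1 - β)) := by
        rw [show β - γ = (1 - γ) - (1 - β) by ring, Real.rpow_sub hn' (1 - γ)]
        field_simp
    _ ≤ genHarmonic γ n / genHarmonic β n :=
        div_le_div₀ (genHarmonic_pos γ hn).le (le_genHarmonic hγ hn)
          (genHarmonic_pos β hn) (genHarmonic_le hβ0 hβ1 n)

lemma sum_muDist_mul_eq (α c : ℝ) (N : ℕ) (g : ℕ → ℝ) :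
    ∑ X : Fin N → Bool, muDist α c X * g (hammingWt X)
      = c / ((N : ℝ) + 1) ^ (1 - α) * ∑ t ∈ range (N + 1), ((t : ℝ) + 1) ^ (-α) * g t := by
  refine (sum_hammingWt_eq N fun t =>
    c / ((N.choose t : ℝ) * ((t : ℝ) + 1) ^ α * ((N : ℝ) + 1) ^ (1 - α)) * g t).trans ?_
  rw [mul_sum]
  refine sum_congr rfl fun t ht => ?_
  have hchoose : (N.choose t : ℝ) ≠ 0 :=
    Nat.cast_ne_zero.mpr (Nat.choose_pos (Nat.lt_succ_iff.mp (mem_range.mp ht))).ne'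
  rw [nsmul_eq_mul, Real.rpow_neg (by positivity)]
  field_simp

lemma sum_muDist_eq (α c : ℝ) (N : ℕ) :
    ∑ X : Fin N → Bool, muDist α c X = c / ((N : ℝ) + 1) ^ (1 - α) * genHarmonic α (N + 1) := by
  simpa [genHarmonic] using sum_muDist_mul_eq α c N fun _ => 1

lemma sum_muDist_mul_sqrt_eq {α c : ℝ} {N : ℕ} (hc : ∑ X : Fin N → Bool, muDist α c X = 1) :
    ∑ X : Fin N → Bool, muDist α c X * Real.sqrt ((N : ℝ) / ((hammingWt X : ℝ) + 1))
      = Real.sqrt N * (genHarmonic (α + 1 / 2) (N + 1) / genHarmonic α (N + 1)) := by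
  have hterm : ∀ t : ℕ, ((t : ℝ) + 1) ^ (-α) * Real.sqrt ((N : ℝ) / ((t : ℝ) + 1))
      = Real.sqrt N * ((t : ℝ) + 1) ^ (-(α + 1 / 2)) := by
    intro t
    have ht : (0 : ℝ) < t + 1 := by positivity
    rw [Real.sqrt_div' _ ht.le, Real.sqrt_eq_rpow ((t : ℝ) + 1), neg_add, Real.rpow_add ht,
      Real.rpow_neg ht.le (1 / 2)]
    ring
  have hnorm : c / ((N : ℝ) + 1) ^ (1 - α) = (genHarmonic α (N + 1))⁻¹ :=
    eq_inv_of_mul_eq_one_left ((sum_muDist_eq α c N).symm.trans hc)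
  refine (sum_muDist_mul_eq α c N fun t => Real.sqrt ((N : ℝ) / ((t : ℝ) + 1))).trans ?_
  simp_rw [hterm, ← mul_sum]
  rw [hnorm]
  simp only [genHarmonic]
  ring

lemma half_le_sqrt_div_sqrt_add_one {x : ℝ} (hx : 1 ≤ x) :
    1 / 2 ≤ Real.sqrt x / Real.sqrt (x + 1) := by
  rw [le_div_iff₀ (by positivity), Real.le_sqrt (by positivity) (by linarith), mul_pow,
    Real.sq_sqrt (by linarith)]
  linarith

lemma rpow_sub_add_half {x : ℝ} (hx : 0 ≤ x) (α : ℝ) : x ^ (α - (α + 1 / 2)) = (Real.sqrt x)⁻¹ := by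
  rw [show α - (α + 1 / 2) = -(1 / 2) by ring, Real.rpow_neg hx, Real.sqrt_eq_rpow]

lemma sum_muDist_mul_sqrt_le {α c : ℝ} (hα0 : 0 < α) (hα1 : α < 1 / 2) {N : ℕ}
    (hc : ∑ X : Fin N → Bool, muDist α c X = 1) :
    ∑ X : Fin N → Bool, muDist α c X * Real.sqrt ((N : ℝ) / ((hammingWt X : ℝ) + 1))
      ≤ 1 / (1 / 2 - α) := by
  have hratio := genHarmonic_div_le (γ := α + 1 / 2) hα0.le (by linarith) (by linarith)
    N.succ_ne_zero
  push_cast at hratio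
  rw [rpow_sub_add_half (by positivity), show 1 - (α + 1 / 2) = 1 / 2 - α by ring] at hratio
  have hsqrt : Real.sqrt N * (Real.sqrt (N + 1))⁻¹ ≤ 1 := by
    rw [← div_eq_mul_inv, div_le_one (by positivity)]
    exact Real.sqrt_le_sqrt (by linarith)
  calc _ = Real.sqrt N * (genHarmonic (α + 1 / 2) (N + 1) / genHarmonic α (N + 1)) :=
        sum_muDist_mul_sqrt_eq hc
    _ ≤ Real.sqrt N * ((Real.sqrt (N + 1))⁻¹ / (1 / 2 - α)) := by gcongr
    _ = Real.sqrt N * (Real.sqrt (N + 1))⁻¹ * (1 / (1 / 2 - α)) := by ring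
    _ ≤ 1 * (1 / (1 / 2 - α)) := by gcongr
    _ = 1 / (1 / 2 - α) := one_mul _

lemma le_sum_muDist_mul_sqrt {α c : ℝ} (hα0 : 0 < α) (hα1 : α < 1 / 2) {N : ℕ} (hN : 1 ≤ N)
    (hc : ∑ X : Fin N → Bool, muDist α c X = 1) :
    (1 - α) / 2
      ≤ ∑ X : Fin N → Bool, muDist α c X * Real.sqrt ((N : ℝ) / ((hammingWt X : ℝ) + 1)) := by
  have hratio := le_genHarmonic_div (γ := α + 1 / 2) hα0.le (by linarith) (by linarith)
    N.succ_ne_zero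
  push_cast at hratio
  rw [rpow_sub_add_half (by positivity)] at hratio
  have hsqrt := half_le_sqrt_div_sqrt_add_one (x := N) (by exact_mod_cast hN)
  calc (1 - α) / 2 ≤ (1 - α) * (Real.sqrt N / Real.sqrt (N + 1)) := by
        rw [div_eq_mul_one_div (1 - α)]; gcongr; linarith
    _ = Real.sqrt N * ((1 - α) * (Real.sqrt (N + 1))⁻¹) := by ring
    _ ≤ Real.sqrt N * (genHarmonic (α + 1 / 2) (N + 1) / genHarmonic α (N + 1)) := by gcongr
    _ = _ := (sum_muDist_mul_sqrt_eq hc).symm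

/-- For `α ∈ (0, 1/2)`, the μ-expectation of the quantum query cost
`√(N/(|X|+1))` is `Θ(1)`. -/
theorem average_quantum_or_cost_theta
    (α : ℝ) (hα0 : 0 < α) (hα1 : α < 1 / 2) :
    ∃ c₁ > (0 : ℝ), ∃ c₂ > (0 : ℝ), ∀ N : ℕ, 1 ≤ N → ∀ c : ℝ,
      (∑ X : Fin N → Bool, muDist α c X = 1) →
      c₁ ≤ (∑ X : Fin N → Bool,
              muDist α c X * Real.sqrt ((N : ℝ) / ((hammingWt X : ℝ) + 1))) ∧
        (∑ X : Fin N → Bool,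
            muDist α c X * Real.sqrt ((N : ℝ) / ((hammingWt X : ℝ) + 1)))
          ≤ c₂ := by
  have hα : 0 < 1 / 2 - α := by linarith
  exact ⟨(1 - α) / 2, by linarith, 1 / (1 / 2 - α), by positivity, fun N hN c hc =>
    ⟨le_sum_muDist_mul_sqrt hα0 hα1 hN hc, sum_muDist_mul_sqrt_le hα0 hα1 hc⟩⟩
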